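/- Let m, n be positive integers, 0 ≤ k ≤ n, and A the m^n × m^n matrix indexed by (ℤ/mℤ)^n with A_{f,g} = C(Z(g-f), k). Fix a primitive m-th root of unity ζ. Then for each y ∈ (ℤ/mℤ)^n, the vector v_y with entries (v_y)_x = ζ^{y·x} is an eigenvector of A with eigenvalue m^{n-k} · C(Z(y), n-k). -/

import Mathlib

/-!
The matrix is a convolution operator on the group `(ZMod m)ⁿ`, `A f g = w (g - f)` with
`w h = C(Z(h), k)`, so every additive character `x ↦ ζ ^ (y ⬝ᵥ x)` is an eigenvector, with
eigenvalue the Fourier coefficient `∑ₕ w h ζ ^ (y ⬝ᵥ h)`. Writing `C(Z(h), k)` as the number of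
`k`-sets `S` on which `h` vanishes and summing over `h` first, the sum over the `h` vanishing on
`S` factors over the coordinates outside `S`; it is `m ^ (n - k)` if `y` vanishes outside `S`
and `0` otherwise. The `k`-sets whose complement lies in the zero set of `y` are counted by
`C(Z(y), n - k)`.
-/

open Finset

namespace Finset

variable {ι : Type*} [Fintype ι] (p : ι → Prop) [DecidablePred p] (k : ℕ)

theorem choose_card_filter_eq_card_powersetCard_filter :
    (#{i | p i}).choose k = #{S ∈ powersetCard k univ | ∀ i ∈ S, p i} := by
  rw [← card_powersetCard]
  congr 1
  ext S
  simp [subset_iff, and_comm]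

theorem card_powersetCard_filter_forall_mem_compl [DecidableEq ι] (hk : k ≤ Fintype.card ι) :
    #{S ∈ powersetCard k univ | ∀ i ∈ Sᶜ, p i} = (#{i | p i}).choose (Fintype.card ι - k) := by
  rw [choose_card_filter_eq_card_powersetCard_filter]
  refine card_nbij' compl compl (fun S hS => ?_) (fun T hT => ?_) (fun S _ => compl_compl S)
    (fun T _ => compl_compl T)
  · simp_all [card_compl]
  · simp_all [card_compl]
    omega

end Finset

theorem Matrix.mulVec_of_sub_addChar {G R : Type*} [AddCommGroup G] [Fintype G]
    [CommSemiring R] (w : G → R) (χ : AddChar G R) :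
    (Matrix.of fun f g => w (g - f)).mulVec χ = (∑ h, w h * χ h) • ⇑χ := by
  funext f
  rw [Pi.smul_apply, smul_eq_mul, mul_comm, mulVec, dotProduct, Finset.mul_sum]
  refine (Fintype.sum_equiv (Equiv.addLeft f) _ _ fun h => ?_).symm
  simp [AddChar.map_add_eq_mul, mul_left_comm]

namespace AddChar

lemma map_sum_eq_prod {A M ι : Type*} [AddCommMonoid A] [CommMonoid M] (ψ : AddChar A M)
    (s : Finset ι) (f : ι → A) : ψ (∑ i ∈ s, f i) = ∏ i ∈ s, ψ (f i) := by
  induction s using Finset.cons_induction with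
  | empty => simp
  | cons i s hi ih => rw [sum_cons, map_add_eq_mul, ih, prod_cons]

def dotProductChar {ι R M : Type*} [Fintype ι] [CommRing R] [CommMonoid M] (ψ : AddChar R M)
    (y : ι → R) : AddChar (ι → R) M where
  toFun x := ψ (y ⬝ᵥ x)
  map_zero_eq_one' := by simp
  map_add_eq_mul' a b := by simp [dotProduct_add, map_add_eq_mul]

section Fourier

variable {ι R R' : Type*} [Fintype ι] [DecidableEq ι] [CommRing R] [Fintype R] [DecidableEq R]
  [CommRing R'] [IsDomain R'] {ψ : AddChar R R'}

theorem sum_ite_forall_mem_eq_zero_mul_dotProduct (hψ : ψ.IsPrimitive) (y : ι → R)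
    (S : Finset ι) :
    ∑ h : ι → R, (if ∀ i ∈ S, h i = 0 then 1 else 0) * ψ (y ⬝ᵥ h) =
      if ∀ i ∈ Sᶜ, y i = 0 then (Fintype.card R : R') ^ #Sᶜ else 0 := by
  let φ (i : ι) (a : R) : R' := (if i ∈ S then (if a = 0 then 1 else 0) else 1) * ψ (y i * a)
  have hfactor (h : ι → R) :
      (if ∀ i ∈ S, h i = 0 then 1 else 0) * ψ (y ⬝ᵥ h) = ∏ i, φ i (h i) := by
    rw [prod_mul_distrib, Fintype.prod_ite_mem, prod_boole, dotProduct, map_sum_eq_prod]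
    -- the two sides differ only in their `Decidable` instances
    congr
  have hcoord (i : ι) :
      ∑ a, φ i a = if i ∈ Sᶜ then (if y i = 0 then (Fintype.card R : R') else 0) else 1 := by
    by_cases hi : i ∈ S
    · simp [φ, hi]
    · simpa [φ, hi, mul_comm (y i)] using sum_mulShift (y i) hψ
  rw [Fintype.sum_congr _ _ hfactor, ← Fintype.prod_sum, Fintype.prod_congr _ _ hcoord,
    Fintype.prod_ite_mem, prod_ite_zero, prod_const]
  congr

theorem sum_choose_card_zeros_mul_dotProduct (hψ : ψ.IsPrimitive) (y : ι → R) {k : ℕ}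
    (hk : k ≤ Fintype.card ι) :
    ∑ h : ι → R, ((#{i | h i = 0}).choose k : R') * ψ (y ⬝ᵥ h) =
      (Fintype.card R : R') ^ (Fintype.card ι - k) *
        (#{i | y i = 0}).choose (Fintype.card ι - k) := by
  calc ∑ h : ι → R, ((#{i | h i = 0}).choose k : R') * ψ (y ⬝ᵥ h)
      = ∑ S ∈ powersetCard k univ, ∑ h : ι → R,
          (if ∀ i ∈ S, h i = 0 then 1 else 0) * ψ (y ⬝ᵥ h) := by
        simp_rw [choose_card_filter_eq_card_powersetCard_filter, natCast_card_filter, sum_mul]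
        rw [sum_comm]
        congr!
    _ = ∑ S ∈ powersetCard k univ,
          if ∀ i ∈ Sᶜ, y i = 0 then (Fintype.card R : R') ^ (Fintype.card ι - k) else 0 :=
        sum_congr rfl fun S hS => by
          rw [sum_ite_forall_mem_eq_zero_mul_dotProduct hψ, card_compl,
            (mem_powersetCard.mp hS).2]
    _ = _ := by
        rw [← sum_filter, sum_const, nsmul_eq_mul,
          card_powersetCard_filter_forall_mem_compl _ _ hk, mul_comm]

end Fourier

end AddChar

theorem stmt_7_general (m n k : ℕ) [NeZero m] (hk : k ≤ n)
    (A : Matrix (Fin n → ZMod m) (Fin n → ZMod m) ℂ)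
    (hA : ∀ f g, A f g =
      ((Finset.univ.filter (fun i => (g - f) i = 0)).card.choose k : ℂ))
    (ζ : ℂ) (hζ : IsPrimitiveRoot ζ m) (y : Fin n → ZMod m)
    (v : (Fin n → ZMod m) → ℂ)
    (hv : ∀ x, v x = ζ ^ (∑ i, y i * x i).val) :
    v ≠ 0 ∧
    A.mulVec v =
      ((m : ℂ) ^ (n - k) *
        ((Finset.univ.filter (fun i => y i = 0)).card.choose (n - k) : ℂ)) • v := by
  set ψ := AddChar.zmodChar m hζ.pow_eq_one
  replace hv : v = ψ.dotProductChar y := funext hv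
  let w (h : Fin n → ZMod m) : ℂ := (#{i | h i = 0}).choose k
  replace hA : A = Matrix.of fun f g => w (g - f) := Matrix.ext hA
  have hw := AddChar.sum_choose_card_zeros_mul_dotProduct
    (AddChar.zmodChar_primitive_of_primitive_root m hζ) y (k := k) (by simpa using hk)
  rw [ZMod.card, Fintype.card_fin] at hw
  refine ⟨fun h => by simpa [hv] using congrFun h 0, ?_⟩
  rw [hA, hv, Matrix.mulVec_of_sub_addChar, ← hw]
  rfl

theorem stmt_7 (m n k : ℕ) [NeZero m] (hn : 0 < n) (hk : k ≤ n)
    (A : Matrix (Fin n → ZMod m) (Fin n → ZMod m) ℂ)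
    (hA : ∀ f g, A f g =
      ((Finset.univ.filter (fun i => (g - f) i = 0)).card.choose k : ℂ))
    (ζ : ℂ) (hζ : IsPrimitiveRoot ζ m) (y : Fin n → ZMod m)
    (v : (Fin n → ZMod m) → ℂ)
    (hv : ∀ x, v x = ζ ^ (∑ i, y i * x i).val) :
    v ≠ 0 ∧
    A.mulVec v =
      ((m : ℂ) ^ (n - k) *
        ((Finset.univ.filter (fun i => y i = 0)).card.choose (n - k) : ℂ)) • v :=
  stmt_7_general m n k hk A hA ζ hζ y v hv
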